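/- Let $F$ be a non-archimedean local field and $z \in \Omega_F^r$ a point of the Berkovich Drinfeld period domain, normalized so that $e_r(z) = 1$, with associated norm $\nu_z$ on $F^r$ and imaginary part $\mathrm{im}(z) = D(\nu_z)$. For $g = (a_{ij}) \in \mathrm{GL}_r(F)$ with automorphy factor $j(g,z) = (a_{r1}e_1 + \cdots + a_{rr}e_r)(z)$, one has $\mathrm{im}(g\cdot z) = \frac{|\det g|_F}{|j(g,z)|^r}\cdot\mathrm{im}(z)$. -/

import Mathlib

/-- An abstract (non-archimedean, multiplicative) absolute value on a field `F`. -/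
structure NAAbs (F : Type*) [Field F] where
  abs : F → ℝ
  nonneg : ∀ a, 0 ≤ abs a
  eq_zero : ∀ a, abs a = 0 ↔ a = 0
  map_mul : ∀ a b, abs (a * b) = abs a * abs b
  ultra : ∀ a b, abs (a + b) ≤ max (abs a) (abs b)

/-- `F` together with `A` is a non-archimedean *local* field with uniformizer `π`:
the value group is discrete with generator `|π| < 1`, the residue field is finite,
and `F` is complete. -/
def NAAbs.IsLocal {F : Type*} [Field F] (A : NAAbs F) (π : F) : Prop :=
  π ≠ 0 ∧ A.abs π < 1 ∧ (∀ a : F, A.abs a < 1 → A.abs a ≤ A.abs π) ∧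
  (∃ S : Finset F, ∀ a : F, A.abs a ≤ 1 → ∃ s ∈ S, A.abs (a - s) < 1) ∧
  (∀ f : ℕ → F, (∀ ε : ℝ, 0 < ε → ∃ N, ∀ m ≥ N, ∀ n ≥ N, A.abs (f m - f n) < ε) →
    ∃ x : F, ∀ ε : ℝ, 0 < ε → ∃ N, ∀ n ≥ N, A.abs (f n - x) < ε)

/-- A non-archimedean norm on an `F`-vector space `V`, relative to the absolute value `A`. -/
structure NANorm {F : Type*} [Field F] (A : NAAbs F)
    (V : Type*) [AddCommGroup V] [Module F V] where
  nu : V → ℝ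
  nonneg : ∀ v, 0 ≤ nu v
  eq_zero : ∀ v, nu v = 0 ↔ v = 0
  smul_eq : ∀ (a : F) (v : V), nu (a • v) = A.abs a * nu v
  ultra : ∀ u v, nu (u + v) ≤ max (nu u) (nu v)

/-- `b` is an `O_F`-basis of the `O_F`-lattice `L ⊆ V`. -/
def IsLatticeBasis {F : Type*} [Field F] (A : NAAbs F)
    {V : Type*} [AddCommGroup V] [Module F V]
    {ι : Type*} [Fintype ι] (b : ι → V) (L : Set V) : Prop :=
  LinearIndependent F b ∧
  ∀ v : V, v ∈ L ↔ ∃ c : ι → F, (∀ i, A.abs (c i) ≤ 1) ∧ v = ∑ i, c i • b i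

/-- `b` is orthogonal with respect to the norm(-like function) `νn`. -/
def IsOrthogonalFor {F : Type*} [Field F] (A : NAAbs F)
    {V : Type*} [AddCommGroup V] [Module F V]
    {ι : Type*} [Fintype ι] (νn : V → ℝ) (b : ι → V) : Prop :=
  ∀ c : ι → F, νn (∑ i, c i • b i) = ⨆ i, νn (c i • b i)

/-! With `w i = u' i ᵥ* g`, the hypothesis on `u'` says that `w` is `ν`-orthogonal. If `u` is
`ν`-orthogonal and `w i = ∑ j, c i j • u j`, the ultrametric inequality bounds `|det c|` by one
permutation term `∏ |c (σ i) i|`, and `|c (σ i) i| ν(u i) ≤ ν(w (σ i))` by orthogonality; hence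
`|det c| ∏ ν(u i) ≤ ∏ ν(w i)`, with equality when both families are orthogonal bases. Here
`|det c| = |det g| |det U'| / |det U|`, and `|det U'| = |det U|` because two bases of the same
`O_F`-lattice differ by integral matrices in both directions. -/

namespace NAAbs

variable {F : Type*} [Field F] (A : NAAbs F)

def toAbsoluteValue : AbsoluteValue F ℝ where
  toFun := A.abs
  map_mul' := A.map_mul
  nonneg' := A.nonneg
  eq_zero' := A.eq_zero
  add_le' a b := (A.ultra a b).trans
    (max_le (le_add_of_nonneg_right (A.nonneg b)) (le_add_of_nonneg_left (A.nonneg a)))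

lemma abs_one : A.abs 1 = 1 := A.toAbsoluteValue.map_one

lemma abs_zero : A.abs 0 = 0 := (A.eq_zero 0).mpr rfl

lemma abs_neg (x : F) : A.abs (-x) = A.abs x := A.toAbsoluteValue.map_neg x

lemma abs_prod {ι : Type*} (s : Finset ι) (f : ι → F) :
    A.abs (∏ i ∈ s, f i) = ∏ i ∈ s, A.abs (f i) :=
  map_prod A.toAbsoluteValue f s

lemma abs_intCast_units_mul (s : ℤˣ) (x : F) : A.abs (((s : ℤ) : F) * x) = A.abs x := by
  rcases Int.units_eq_one_or s with rfl | rfl <;> simp [A.abs_neg]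

lemma exists_abs_det_le {ι : Type*} [Fintype ι] [DecidableEq ι] (M : Matrix ι ι F) :
    ∃ σ : Equiv.Perm ι, A.abs M.det ≤ ∏ i, A.abs (M (σ i) i) := by
  obtain ⟨σ, -, hσ⟩ := IsNonarchimedean.finset_image_add_of_nonempty A.ultra
    (fun σ : Equiv.Perm ι => ((Equiv.Perm.sign σ : ℤ) : F) * ∏ i, M (σ i) i)
    Finset.univ_nonempty
  refine ⟨σ, ?_⟩
  rw [M.det_apply', ← A.abs_prod]
  exact hσ.trans_eq (A.abs_intCast_units_mul _ _)

lemma abs_det_le_one {ι : Type*} [Fintype ι] [DecidableEq ι] (M : Matrix ι ι F)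
    (hM : ∀ i j, A.abs (M i j) ≤ 1) : A.abs M.det ≤ 1 := by
  obtain ⟨σ, hσ⟩ := A.exists_abs_det_le M
  exact hσ.trans (Finset.prod_le_one (fun i _ => A.nonneg _) fun i _ => hM _ _)

end NAAbs

section Lattice

variable {F : Type*} [Field F] {A : NAAbs F} {ι : Type*} [Fintype ι]

lemma IsLatticeBasis.mem {V : Type*} [AddCommGroup V] [Module F V] {b : ι → V} {L : Set V}
    (hb : IsLatticeBasis A b L) (i : ι) : b i ∈ L := by
  classical
  refine (hb.2 (b i)).mpr ⟨Pi.single i 1, fun j => ?_, by simp [Pi.single_apply, ite_smul]⟩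
  rcases eq_or_ne j i with rfl | hji
  · simp [A.abs_one]
  · simp [hji, A.abs_zero]

lemma IsLatticeBasis.abs_det_le [DecidableEq ι] {L : Set (ι → F)} {b b' : ι → ι → F}
    (hb : IsLatticeBasis A b L) (hb' : IsLatticeBasis A b' L) :
    A.abs (Matrix.of b').det ≤ A.abs (Matrix.of b).det := by
  choose H hH hb'H using fun i => (hb.2 (b' i)).mp (hb'.mem i)
  have hmul : Matrix.of b' = Matrix.of H * Matrix.of b := by
    funext i
    rw [Matrix.mul_apply_eq_vecMul, Matrix.vecMul_eq_sum]
    exact hb'H i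
  rw [hmul, Matrix.det_mul, A.map_mul]
  exact mul_le_of_le_one_left (A.nonneg _) (A.abs_det_le_one _ hH)

lemma IsLatticeBasis.abs_det_eq [DecidableEq ι] {L : Set (ι → F)} {b b' : ι → ι → F}
    (hb : IsLatticeBasis A b L) (hb' : IsLatticeBasis A b' L) :
    A.abs (Matrix.of b').det = A.abs (Matrix.of b).det :=
  (hb.abs_det_le hb').antisymm (hb'.abs_det_le hb)

end Lattice

namespace IsOrthogonalFor

variable {F : Type*} [Field F] {A : NAAbs F} {V : Type*} [AddCommGroup V] [Module F V]
  {ι : Type*} [Fintype ι]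

lemma of_const_mul {νn : V → ℝ} {b : ι → V} {a : ℝ} (ha : 0 < a)
    (h : IsOrthogonalFor A (fun x => a * νn x) b) : IsOrthogonalFor A νn b := fun c =>
  mul_left_cancel₀ ha.ne' ((h c).trans (Real.mul_iSup_of_nonneg ha.le _).symm)

lemma of_comp {W : Type*} [AddCommGroup W] [Module F W] {νn : W → ℝ} {b : ι → V}
    (f : V →ₗ[F] W) (h : IsOrthogonalFor A (fun x => νn (f x)) b) :
    IsOrthogonalFor A νn (fun i => f (b i)) := fun c => by
  simpa only [map_sum, map_smul] using h c

variable (ν : NANorm A V) {u : ι → V}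

lemma abs_mul_le_sum (hu : IsOrthogonalFor A ν.nu u) (c : ι → F) (j : ι) :
    A.abs (c j) * ν.nu (u j) ≤ ν.nu (∑ i, c i • u i) := by
  rw [hu c, ← ν.smul_eq]
  exact le_ciSup (f := fun i => ν.nu (c i • u i)) (Set.finite_range _).bddAbove j

lemma abs_det_mul_prod_le [DecidableEq ι] (hu : IsOrthogonalFor A ν.nu u) (c : Matrix ι ι F) :
    A.abs c.det * ∏ i, ν.nu (u i) ≤ ∏ i, ν.nu (∑ j, c i j • u j) := by
  obtain ⟨σ, hσ⟩ := A.exists_abs_det_le c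
  calc A.abs c.det * ∏ i, ν.nu (u i)
      ≤ ∏ i, A.abs (c (σ i) i) * ν.nu (u i) := by
        rw [Finset.prod_mul_distrib]
        exact mul_le_mul_of_nonneg_right hσ (Finset.prod_nonneg fun i _ => ν.nonneg _)
    _ ≤ ∏ i, ν.nu (∑ j, c (σ i) j • u j) :=
        Finset.prod_le_prod (fun i _ => mul_nonneg (A.nonneg _) (ν.nonneg _))
          fun i _ => hu.abs_mul_le_sum ν (c (σ i)) i
    _ = ∏ i, ν.nu (∑ j, c i j • u j) := Equiv.prod_comp σ fun i => ν.nu (∑ j, c i j • u j)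

end IsOrthogonalFor

namespace IsOrthogonalFor

variable {F : Type*} [Field F] {A : NAAbs F} {ι : Type*} [Fintype ι] [DecidableEq ι]
  (ν : NANorm A (ι → F)) {u : ι → ι → F}

lemma abs_det_mul_prod_le_of_isUnit (hu : IsOrthogonalFor A ν.nu u)
    (hU : IsUnit (Matrix.of u).det) (w : ι → ι → F) :
    A.abs (Matrix.of w).det * ∏ i, ν.nu (u i) ≤ A.abs (Matrix.of u).det * ∏ i, ν.nu (w i) := by
  set c := Matrix.of w * (Matrix.of u)⁻¹
  have hwc : Matrix.of w = c * Matrix.of u := by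
    rw [Matrix.mul_assoc, Matrix.nonsing_inv_mul _ hU, Matrix.mul_one]
  have hw (i : ι) : w i = ∑ j, c i j • u j :=
    (congrFun hwc i).trans (Matrix.vecMul_eq_sum (c i) (Matrix.of u))
  calc A.abs (Matrix.of w).det * ∏ i, ν.nu (u i)
      = A.abs (Matrix.of u).det * (A.abs c.det * ∏ i, ν.nu (u i)) := by
        rw [hwc, Matrix.det_mul, A.map_mul]
        ring
    _ ≤ A.abs (Matrix.of u).det * ∏ i, ν.nu (∑ j, c i j • u j) :=
        mul_le_mul_of_nonneg_left (hu.abs_det_mul_prod_le ν c) (A.nonneg _)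
    _ = A.abs (Matrix.of u).det * ∏ i, ν.nu (w i) := by simp only [← hw]

lemma abs_det_mul_prod_eq {w : ι → ι → F} (hu : IsOrthogonalFor A ν.nu u)
    (hw : IsOrthogonalFor A ν.nu w) (hU : IsUnit (Matrix.of u).det)
    (hW : IsUnit (Matrix.of w).det) :
    A.abs (Matrix.of w).det * ∏ i, ν.nu (u i) = A.abs (Matrix.of u).det * ∏ i, ν.nu (w i) :=
  (hu.abs_det_mul_prod_le_of_isUnit ν hU w).antisymm (hw.abs_det_mul_prod_le_of_isUnit ν hW u)

end IsOrthogonalFor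

theorem statement13_general {F : Type*} [Field F] (A : NAAbs F)
    (r : ℕ) (ν : NANorm A (Fin (r + 1) → F))
    (g : Matrix (Fin (r + 1)) (Fin (r + 1)) F) (hg : IsUnit g.det)
    (J : ℝ) (hJ : J = ν.nu (g (Fin.last r)))
    (u u' : Fin (r + 1) → (Fin (r + 1) → F))
    (hu : IsLatticeBasis A u {x : Fin (r + 1) → F | ∀ i, A.abs (x i) ≤ 1})
    (huo : IsOrthogonalFor A ν.nu u)
    (hu' : IsLatticeBasis A u' {x : Fin (r + 1) → F | ∀ i, A.abs (x i) ≤ 1})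
    (hu'o : IsOrthogonalFor A (fun x => J⁻¹ * ν.nu (Matrix.vecMul x g)) u') :
    ∏ i, J⁻¹ * ν.nu (Matrix.vecMul (u' i) g)
      = (A.abs g.det / J ^ (r + 1)) * ∏ i, ν.nu (u i) := by
  have hJpos : 0 < J := by
    refine hJ ▸ (ν.nonneg _).lt_of_ne' fun h => hg.ne_zero ?_
    exact Matrix.det_eq_zero_of_row_eq_zero (Fin.last r) (congrFun ((ν.eq_zero _).mp h))
  set w := fun i => Matrix.vecMul (u' i) g
  have hwo : IsOrthogonalFor A ν.nu w :=
    (hu'o.of_const_mul (inv_pos.mpr hJpos)).of_comp g.vecMulLinear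
  have hWg : Matrix.of w = Matrix.of u' * g := rfl
  have hU : IsUnit (Matrix.of u).det :=
    (Matrix.isUnit_iff_isUnit_det _).mp (Matrix.linearIndependent_rows_iff_isUnit.mp hu.1)
  have hUabs : A.abs (Matrix.of u).det ≠ 0 := fun h => hU.ne_zero ((A.eq_zero _).mp h)
  have hU'abs : A.abs (Matrix.of u').det = A.abs (Matrix.of u).det := hu.abs_det_eq hu'
  have hW : IsUnit (Matrix.of w).det := by
    rw [hWg, Matrix.det_mul]
    refine IsUnit.mul (isUnit_iff_ne_zero.mpr fun h => hUabs ?_) hg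
    rw [← hU'abs, h, A.abs_zero]
  have hprod : ∏ i, ν.nu (w i) = A.abs g.det * ∏ i, ν.nu (u i) := by
    have h := huo.abs_det_mul_prod_eq ν hwo hU hW
    rw [hWg, Matrix.det_mul, A.map_mul, hU'abs, mul_assoc] at h
    exact (mul_left_cancel₀ hUabs h).symm
  rw [Finset.prod_mul_distrib, hprod, Finset.prod_const, Finset.card_univ, Fintype.card_fin,
    inv_pow, div_eq_mul_inv]
  ring

/-- Transformation law of the imaginary part: with
`ν_{g·z} = |j(g,z)|⁻¹ (g*ν_z)`, `|j(g,z)| = ν_z(last row of g)`, and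
`im(z) = D(ν_z)` (computed via orthogonal bases of the standard lattice),
`im(g·z) = (|det g|_F / |j(g,z)|^r) · im(z)`.  (Rank `r + 1 ≥ 1`.) -/
theorem statement13 {F : Type*} [Field F] (A : NAAbs F) (π : F) (hloc : A.IsLocal π)
    (r : ℕ) (ν : NANorm A (Fin (r + 1) → F))
    (g : Matrix (Fin (r + 1)) (Fin (r + 1)) F) (hg : IsUnit g.det)
    (J : ℝ) (hJ : J = ν.nu (g (Fin.last r)))
    (u u' : Fin (r + 1) → (Fin (r + 1) → F))
    (hu : IsLatticeBasis A u {x : Fin (r + 1) → F | ∀ i, A.abs (x i) ≤ 1})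
    (huo : IsOrthogonalFor A ν.nu u)
    (hu' : IsLatticeBasis A u' {x : Fin (r + 1) → F | ∀ i, A.abs (x i) ≤ 1})
    (hu'o : IsOrthogonalFor A (fun x => J⁻¹ * ν.nu (Matrix.vecMul x g)) u') :
    ∏ i, J⁻¹ * ν.nu (Matrix.vecMul (u' i) g)
      = (A.abs g.det / J ^ (r + 1)) * ∏ i, ν.nu (u i) :=
  statement13_general A r ν g hg J hJ u u' hu huo hu' hu'o
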